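/- arXiv:2410.06559 — 2 statements merged into one kernel-verified Lean document; each statement's English description precedes it below -/
import Mathlib

section
/- The pseudometric space (𝒫(ℕ), d) with d(A,B) := ν⁺(A △ B) is complete: every Cauchy sequence of subsets of ℕ converges to some subset of ℕ in the pseudometric d. -/
open Filter
open scoped symmDiff Classical

noncomputable def densSeq (A : Set ℕ) (n : ℕ) : ℝ :=
  ((Finset.range n).filter (· ∈ A)).card / (n : ℝ)

noncomputable def nuPlus (A : Set ℕ) : ℝ :=
  Filter.atTop.limsup (densSeq A)

noncomputable def nuMinus (A : Set ℕ) : ℝ :=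
  Filter.atTop.liminf (densSeq A)

/-!
Completeness reduces to sequences `S` with `ν⁺(S l ∆ S (l+1)) < ε l` for a summable `ε`.
Past some threshold `M l`, every initial segment `{0, …, n-1}` meets `S l ∆ S (l+1)` in fewer
than `ε l · n` points. Glue the `S k` along these thresholds: a point `x` of the limit set is
decided by `S k` for the largest `k ≤ x` with `M 0, …, M (k-1) ≤ x`. Apart from finitely many
points, an element of `S j ∆ B` then lies in `S l ∆ S (l+1)` for some `l ≥ j` past its
threshold, so `ν⁺(S j ∆ B)` is at most the tail `∑_{l ≥ j} ε l`.
-/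

open Topology

lemma densSeq_nonneg (A : Set ℕ) (n : ℕ) : 0 ≤ densSeq A n := by
  unfold densSeq; positivity

lemma densSeq_le_one (A : Set ℕ) (n : ℕ) : densSeq A n ≤ 1 := by
  rcases Nat.eq_zero_or_pos n with rfl | hn
  · simp [densSeq]
  · rw [densSeq, div_le_one (by exact_mod_cast hn)]
    exact_mod_cast (Finset.card_filter_le _ _).trans (Finset.card_range n).le

lemma isBoundedUnder_le_densSeq (A : Set ℕ) : IsBoundedUnder (· ≤ ·) atTop (densSeq A) :=
  isBoundedUnder_of ⟨1, densSeq_le_one A⟩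

lemma isBoundedUnder_ge_densSeq (A : Set ℕ) : IsBoundedUnder (· ≥ ·) atTop (densSeq A) :=
  isBoundedUnder_of ⟨0, densSeq_nonneg A⟩

lemma densSeq_mono_of_forall_lt {A B : Set ℕ} {n : ℕ} (h : ∀ x < n, x ∈ A → x ∈ B) :
    densSeq A n ≤ densSeq B n := by
  unfold densSeq
  refine div_le_div_of_nonneg_right ?_ (Nat.cast_nonneg n)
  exact_mod_cast Finset.card_le_card fun x hx => by
    rw [Finset.mem_filter, Finset.mem_range] at hx ⊢
    exact ⟨hx.1, h x hx.1 hx.2⟩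

lemma densSeq_empty (n : ℕ) : densSeq ∅ n = 0 := by
  simp [densSeq]

lemma densSeq_le_of_forall_mem_lt {A : Set ℕ} {c : ℕ} (h : ∀ x ∈ A, x < c) (n : ℕ) :
    densSeq A n ≤ c / n := by
  unfold densSeq
  refine div_le_div_of_nonneg_right (Nat.cast_le.2 ?_) (Nat.cast_nonneg n)
  refine (Finset.card_le_card fun x hx => ?_).trans (Finset.card_range c).le
  exact Finset.mem_range.2 (h x (Finset.mem_filter.1 hx).2)

lemma densSeq_union_le (A B : Set ℕ) (n : ℕ) :
    densSeq (A ∪ B) n ≤ densSeq A n + densSeq B n := by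
  unfold densSeq
  rw [← add_div, ← Nat.cast_add]
  refine div_le_div_of_nonneg_right (Nat.cast_le.2 ?_) (Nat.cast_nonneg n)
  refine (Finset.card_le_card fun x hx => ?_).trans (Finset.card_union_le _ _)
  simp only [Finset.mem_filter, Finset.mem_union, Set.mem_union] at hx ⊢
  tauto

lemma densSeq_biUnion_le {ι : Type*} (s : Finset ι) (T : ι → Set ℕ) (n : ℕ) :
    densSeq (⋃ i ∈ s, T i) n ≤ ∑ i ∈ s, densSeq (T i) n := by
  classical
  induction s using Finset.induction_on with
  | empty => simp [densSeq_empty]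
  | insert i s hi ih =>
    rw [Finset.set_biUnion_insert, Finset.sum_insert hi]
    exact (densSeq_union_le _ _ n).trans (add_le_add_right ih _)

lemma nuPlus_nonneg (A : Set ℕ) : 0 ≤ nuPlus A :=
  le_limsup_of_frequently_le (Frequently.of_forall (densSeq_nonneg A))
    (isBoundedUnder_le_densSeq A)

lemma nuPlus_symmDiff_self (A : Set ℕ) : nuPlus (A ∆ A) = 0 := by
  rw [symmDiff_self, Set.bot_eq_empty, nuPlus, show densSeq ∅ = fun _ => 0 from
    funext densSeq_empty, limsup_const]

lemma nuPlus_symmDiff_comm (A B : Set ℕ) : nuPlus (A ∆ B) = nuPlus (B ∆ A) := by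
  rw [symmDiff_comm]

lemma nuPlus_mono {A B : Set ℕ} (h : A ⊆ B) : nuPlus A ≤ nuPlus B :=
  limsup_le_limsup (Eventually.of_forall fun _ => densSeq_mono_of_forall_lt fun _ _ hx => h hx)
    (isBoundedUnder_ge_densSeq A).isCoboundedUnder_le (isBoundedUnder_le_densSeq B)

lemma nuPlus_union_le (A B : Set ℕ) : nuPlus (A ∪ B) ≤ nuPlus A + nuPlus B := calc
  nuPlus (A ∪ B) ≤ atTop.limsup (densSeq A + densSeq B) :=
    limsup_le_limsup (Eventually.of_forall (densSeq_union_le A B))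
      (isBoundedUnder_ge_densSeq _).isCoboundedUnder_le
      (isBoundedUnder_of ⟨1 + 1, fun n => add_le_add (densSeq_le_one A n) (densSeq_le_one B n)⟩)
  _ ≤ nuPlus A + nuPlus B :=
    limsup_add_le (isBoundedUnder_ge_densSeq A) (isBoundedUnder_le_densSeq A)
      (isBoundedUnder_ge_densSeq B).isCoboundedUnder_le (isBoundedUnder_le_densSeq B)

lemma nuPlus_symmDiff_triangle (A B C : Set ℕ) :
    nuPlus (A ∆ C) ≤ nuPlus (A ∆ B) + nuPlus (B ∆ C) :=
  (nuPlus_mono (symmDiff_triangle A B C)).trans (nuPlus_union_le _ _)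

lemma nuPlus_le_of_densSeq_le {A : Set ℕ} {c r : ℝ} (h : ∀ n, densSeq A n ≤ c / n + r) :
    nuPlus A ≤ r := by
  have hlim : Tendsto (fun n : ℕ => c / n + r) atTop (𝓝 r) := by
    simpa using (tendsto_const_div_atTop_nhds_zero_nat c).add_const r
  calc nuPlus A ≤ atTop.limsup (fun n : ℕ => c / n + r) :=
        limsup_le_limsup (Eventually.of_forall h)
          (isBoundedUnder_ge_densSeq A).isCoboundedUnder_le hlim.isBoundedUnder_le
    _ = r := hlim.limsup_eq

lemma symmDiff_subset_biUnion_symmDiff_succ {α : Type*} (S : ℕ → Set α) {i j : ℕ}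
    (hij : i ≤ j) :
    S i ∆ S j ⊆ ⋃ l ∈ Finset.Ico i j, S l ∆ S (l + 1) := by
  induction j, hij using Nat.le_induction with
  | base => simp
  | succ j hij ih =>
    rw [Nat.Ico_succ_right_eq_insert_Ico hij, Finset.set_biUnion_insert, Set.union_comm]
    exact (symmDiff_triangle _ _ _).trans (Set.union_subset_union_left _ ih)

-- A type synonym, since `Set ℕ = ℕ → Prop` already carries the product topology.
def UpperDensitySpace : Type := Set ℕ

noncomputable instance : PseudoMetricSpace UpperDensitySpace where
  dist A B := nuPlus ((A : Set ℕ) ∆ B)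
  dist_self := nuPlus_symmDiff_self
  dist_comm := nuPlus_symmDiff_comm
  dist_triangle := nuPlus_symmDiff_triangle

section Gluing

variable (M : ℕ → ℕ)

def blockIndex (x : ℕ) : ℕ :=
  Nat.findGreatest (fun k => ∀ l < k, M l ≤ x) x

lemma blockIndex_le_self (x : ℕ) : blockIndex M x ≤ x :=
  Nat.findGreatest_le x

lemma le_of_lt_blockIndex {l x : ℕ} (h : l < blockIndex M x) : M l ≤ x :=
  Nat.findGreatest_spec (P := fun k => ∀ l < k, M l ≤ x) (Nat.zero_le x)
    (fun _ h => absurd h (Nat.not_lt_zero _)) l h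

lemma exists_forall_le_blockIndex (j : ℕ) : ∃ c, ∀ x ≥ c, j ≤ blockIndex M x :=
  ⟨j + ∑ l ∈ Finset.range j, M l, fun x hx => Nat.le_findGreatest (by omega) fun l hl =>
    (Finset.single_le_sum (fun _ _ => Nat.zero_le _) (Finset.mem_range.2 hl)).trans
      (by omega)⟩

variable (S : ℕ → Set ℕ)

def blockGlue : Set ℕ := {x | x ∈ S (blockIndex M x)}

lemma densSeq_symmDiff_blockGlue_le {ε : ℕ → ℝ} (hε : ∀ l, 0 ≤ ε l)
    (hM : ∀ l, ∀ n ≥ M l, densSeq (S l ∆ S (l + 1)) n ≤ ε l) (j : ℕ) :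
    ∃ c : ℕ, ∀ n,
      densSeq (S j ∆ blockGlue M S) n ≤ c / n + ∑ l ∈ Finset.Ico j n, ε l := by
  obtain ⟨c, hc⟩ := exists_forall_le_blockIndex M j
  set T : ℕ → Set ℕ := fun l => {x | l < blockIndex M x ∧ x ∈ S l ∆ S (l + 1)}
  have hT : ∀ l n, densSeq (T l) n ≤ ε l := by
    intro l n
    rcases le_or_gt (M l) n with hn | hn
    · exact (densSeq_mono_of_forall_lt fun x _ hx => hx.2).trans (hM l n hn)
    · refine (densSeq_mono_of_forall_lt (B := ∅) fun x hx hxT => ?_).trans ?_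
      · exact absurd (le_of_lt_blockIndex M hxT.1) (by omega)
      · exact (densSeq_empty n).trans_le (hε l)
  have hcover : ∀ n, ∀ x < n, x ∈ S j ∆ blockGlue M S →
      x ∈ Set.Iio c ∪ ⋃ l ∈ Finset.Ico j n, T l := by
    intro n x hxn hx
    rcases lt_or_ge x c with hxc | hxc
    · exact Or.inl hxc
    have hx' : x ∈ S j ∆ S (blockIndex M x) := hx
    obtain ⟨l, hl, hxl⟩ := Set.mem_iUnion₂.1 <|
      symmDiff_subset_biUnion_symmDiff_succ S (hc x hxc) hx'
    obtain ⟨hjl, hlx⟩ := Finset.mem_Ico.1 hl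
    have hln : l < n := by have := blockIndex_le_self M x; omega
    exact Or.inr (Set.mem_biUnion (Finset.mem_Ico.2 ⟨hjl, hln⟩) ⟨hlx, hxl⟩)
  refine ⟨c, fun n => ?_⟩
  calc densSeq (S j ∆ blockGlue M S) n
      ≤ densSeq (Set.Iio c ∪ ⋃ l ∈ Finset.Ico j n, T l) n :=
        densSeq_mono_of_forall_lt (hcover n)
    _ ≤ densSeq (Set.Iio c) n + ∑ l ∈ Finset.Ico j n, densSeq (T l) n :=
        (densSeq_union_le _ _ n).trans (add_le_add_right (densSeq_biUnion_le _ _ n) _)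
    _ ≤ c / n + ∑ l ∈ Finset.Ico j n, ε l :=
        add_le_add (densSeq_le_of_forall_mem_lt (fun _ hx => hx) n)
          (Finset.sum_le_sum fun l _ => hT l n)

end Gluing

theorem exists_nuPlus_symmDiff_le_tsum {S : ℕ → Set ℕ} {ε : ℕ → ℝ} (hε : Summable ε)
    (hS : ∀ l, nuPlus (S l ∆ S (l + 1)) < ε l) :
    ∃ B : Set ℕ, ∀ j, nuPlus (S j ∆ B) ≤ ∑' l, ε (l + j) := by
  have hε0 : ∀ l, 0 ≤ ε l := fun l => (nuPlus_nonneg _).trans (hS l).le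
  have hM : ∀ l, ∃ M, ∀ n ≥ M, densSeq (S l ∆ S (l + 1)) n ≤ ε l := fun l =>
    eventually_atTop.1 <| (eventually_lt_of_limsup_lt (hS l)
      (isBoundedUnder_le_densSeq _)).mono fun _ => le_of_lt
  choose M hM using hM
  refine ⟨blockGlue M S, fun j => ?_⟩
  obtain ⟨c, hc⟩ := densSeq_symmDiff_blockGlue_le M S hε0 hM j
  refine nuPlus_le_of_densSeq_le fun n => (hc n).trans (add_le_add_right ?_ _)
  rw [Finset.sum_Ico_eq_sum_range]
  simpa only [add_comm j] using
    ((summable_nat_add_iff j).2 hε).sum_le_tsum _ fun l _ => hε0 (l + j)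

instance : CompleteSpace UpperDensitySpace := by
  refine Metric.complete_of_convergent_controlled_sequences (fun N => (1 / 2 : ℝ) ^ N)
    (fun N => by positivity) fun u hu => ?_
  obtain ⟨B, hB⟩ := exists_nuPlus_symmDiff_le_tsum (S := u) summable_geometric_two
    fun l => hu l l (l + 1) le_rfl l.le_succ
  exact ⟨B, tendsto_iff_dist_tendsto_zero.2 <|
    squeeze_zero (fun _ => dist_nonneg) hB (tendsto_sum_nat_add _)⟩

theorem nuPlus_symmDiff_complete (A : ℕ → Set ℕ)
    (hcauchy : ∀ ε > (0 : ℝ), ∃ N, ∀ m n, N ≤ m → N ≤ n →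
      nuPlus (A m ∆ A n) < ε) :
    ∃ B : Set ℕ, Tendsto (fun n => nuPlus (A n ∆ B)) atTop (nhds 0) := by
  let u : ℕ → UpperDensitySpace := A
  have hu : CauchySeq u := Metric.cauchySeq_iff.2 fun ε hε =>
    (hcauchy ε hε).imp fun N hN m hm n hn => hN m n hm hn
  obtain ⟨B, hB⟩ := cauchySeq_tendsto_of_complete hu
  exact ⟨B, tendsto_iff_dist_tendsto_zero.1 hB⟩
end

section
/- Let X be a set, ℱ ⊆ 𝒫(X) a field, ℰ ⊆ ℱ, and (μ⁺, μ⁻) a conjugate pair of set functions on ℱ (μ⁺ subadditive, μ⁻ superadditive, μ⁻ co-subadditive w.r.t. μ⁺, μ⁺ co-superadditive w.r.t. μ⁻) agreeing on ℰ. Suppose (ℰ, d_{μ⁺}) is complete, where d_{μ⁺}(A,B) := μ⁺(A △ B). Then for every sequence (A_i) in ℰ such that the nets {μ⁺(∪_{k=i}^j A_k) : i ≤ j} and {μ⁻(∪_{k=i}^j A_k) : i ≤ j} (indexed by pairs (i,j) with the product order) converge to a common limit L, the net {∪_{k=i}^j A_k : i ≤ j} converges in d_{μ⁺} to some A ∈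 ℰ with μ⁺(A) = L. -/
/-!
Write `U i j = ⋃_{k=i}^j A_k` and `d(P, Q) = μ⁺(P ∆ Q)`. For `i ≤ m ≤ j` we have `A_m ⊆ U i j`, so
co-superadditivity gives `d(U i j, A_m) ≤ μ⁺(U i j) - μ⁻(A_m)`; both terms tend to `L` (the second
because `A_m = U m m`), so `U i j` is uniformly close to every `A_m` it contains. Consequently `(A_m)`
is `d`-Cauchy, converges to some `B ∈ ℰ` by completeness, the unions converge to `B` by the triangle
inequality, and `μ⁺(B) = L` because `|μ⁺(P) - μ⁺(Q)| ≤ d(P, Q)`.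
-/

open Filter Topology
open scoped symmDiff

section SetFunction

variable {X : Type*}

lemma indicator_one_le_add_of_subset_union {S T V : Set X} (h : S ⊆ T ∪ V) (x : X) :
    S.indicator (1 : X → ℝ) x ≤ T.indicator 1 x + V.indicator 1 x := by
  have hSTV := Set.indicator_le_indicator_of_subset h (zero_le_one : (0 : X → ℝ) ≤ 1) x
  have hsum := congrFun (Set.indicator_union_add_inter (1 : X → ℝ) T V) x
  have hinter : 0 ≤ (T ∩ V).indicator (1 : X → ℝ) x :=
    Set.indicator_nonneg (fun _ _ => zero_le_one) x
  simp only [Pi.add_apply] at hsum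
  linarith

lemma indicator_one_add_le_of_disjoint {B C A : Set X} (hB : B ⊆ A) (hC : C ⊆ A)
    (hBC : Disjoint B C) (x : X) :
    B.indicator (1 : X → ℝ) x + C.indicator 1 x ≤ A.indicator 1 x :=
  (congrFun (Set.indicator_union_of_disjoint hBC 1) x).symm.trans_le
    (Set.indicator_le_indicator_of_subset (Set.union_subset hB hC) (fun _ => zero_le_one) x)

def SubadditiveOn (F : Set (Set X)) (μ : Set X → ℝ) : Prop :=
  ∀ A ∈ F, ∀ B ∈ F, ∀ C ∈ F,
    (∀ x, A.indicator (1 : X → ℝ) x ≤ B.indicator 1 x + C.indicator 1 x) → μ A ≤ μ B + μ C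

def CoSuperadditiveOn (F : Set (Set X)) (μp μm : Set X → ℝ) : Prop :=
  ∀ A ∈ F, ∀ B ∈ F, ∀ C ∈ F,
    (∀ x, B.indicator (1 : X → ℝ) x + C.indicator 1 x ≤ A.indicator 1 x) → μp B + μm C ≤ μp A

variable {F : Set (Set X)}

lemma diff_mem_of_compl_mem_of_union_mem (hcompl : ∀ A ∈ F, Aᶜ ∈ F)
    (hunion : SupClosed F) {P Q : Set X} (hP : P ∈ F) (hQ : Q ∈ F) :
    P \ Q ∈ F := by
  rw [← compl_compl (P \ Q), Set.compl_sdiff]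
  exact hcompl _ (hunion hQ (hcompl P hP))

lemma symmDiff_mem_of_diff_mem (hdiff : ∀ P ∈ F, ∀ Q ∈ F, P \ Q ∈ F)
    (hunion : SupClosed F) {P Q : Set X} (hP : P ∈ F) (hQ : Q ∈ F) :
    P ∆ Q ∈ F :=
  hunion (hdiff P hP Q hQ) (hdiff Q hQ P hP)

lemma biUnion_mem_of_supClosed {ι : Type*} (hF : SupClosed F) {A : ι → Set X} {s : Finset ι}
    (hs : s.Nonempty) (hA : ∀ k ∈ s, A k ∈ F) : (⋃ k ∈ s, A k) ∈ F := by
  rw [← Finset.sup_set_eq_biUnion, ← Finset.sup'_eq_sup hs]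
  exact hF.finsetSup'_mem hs hA

namespace SubadditiveOn

variable {μ : Set X → ℝ} {P Q R : Set X}

lemma symmDiff_triangle (hμ : SubadditiveOn F μ) (hsymm : ∀ P ∈ F, ∀ Q ∈ F, P ∆ Q ∈ F)
    (hP : P ∈ F) (hQ : Q ∈ F) (hR : R ∈ F) : μ (P ∆ R) ≤ μ (P ∆ Q) + μ (Q ∆ R) :=
  hμ _ (hsymm P hP R hR) _ (hsymm P hP Q hQ) _ (hsymm Q hQ R hR)
    (indicator_one_le_add_of_subset_union (_root_.symmDiff_triangle P Q R))

lemma abs_sub_le_symmDiff (hμ : SubadditiveOn F μ) (hsymm : ∀ P ∈ F, ∀ Q ∈ F, P ∆ Q ∈ F)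
    (hP : P ∈ F) (hQ : Q ∈ F) : |μ P - μ Q| ≤ μ (P ∆ Q) := by
  have hPQ := hμ P hP _ (hsymm P hP Q hQ) Q hQ
    (indicator_one_le_add_of_subset_union (le_symmDiff_sup_right P Q))
  have hQP := hμ Q hQ _ (hsymm P hP Q hQ) P hP
    (indicator_one_le_add_of_subset_union (le_symmDiff_sup_left P Q))
  rw [abs_sub_le_iff]
  constructor <;> linarith

end SubadditiveOn

lemma CoSuperadditiveOn.symmDiff_le_sub {μp μm : Set X → ℝ} (h : CoSuperadditiveOn F μp μm)
    (hdiff : ∀ P ∈ F, ∀ Q ∈ F, P \ Q ∈ F) {P Q : Set X} (hP : P ∈ F) (hQ : Q ∈ F)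
    (hPQ : P ⊆ Q) : μp (Q ∆ P) ≤ μp Q - μm P := by
  have := h Q hQ (Q \ P) (hdiff Q hQ P hP) P hP
    (indicator_one_add_le_of_disjoint Set.sdiff_subset hPQ Set.disjoint_sdiff_left)
  rw [symmDiff_of_ge hPQ]
  linarith

lemma SubadditiveOn.tendsto_of_tendsto_symmDiff {ι : Type*} {l : Filter ι} {μ : Set X → ℝ}
    (hμ : SubadditiveOn F μ) (hsymm : ∀ P ∈ F, ∀ Q ∈ F, P ∆ Q ∈ F)
    {A : ι → Set X} {B : Set X} (hA : ∀ n, A n ∈ F) (hB : B ∈ F)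
    (hAB : Tendsto (fun n => μ (A n ∆ B)) l (𝓝 0)) :
    Tendsto (fun n => μ (A n)) l (𝓝 (μ B)) := by
  rw [tendsto_iff_norm_sub_tendsto_zero]
  exact squeeze_zero (fun _ => norm_nonneg _)
    (fun n => hμ.abs_sub_le_symmDiff hsymm (hA n) hB) hAB

end SetFunction

section PartialUnions

variable {X : Type*} {F : Set (Set X)} {μ μp μm : Set X → ℝ} {A : ℕ → Set X} {L : ℝ}

lemma subset_biUnion_Icc {i m j : ℕ} (him : i ≤ m) (hmj : m ≤ j) :
    A m ⊆ ⋃ k ∈ Finset.Icc i j, A k :=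
  Set.subset_biUnion_of_mem (u := A) (Finset.mem_Icc.mpr ⟨him, hmj⟩)

lemma biUnion_Icc_mem (hunion : SupClosed F) (hA : ∀ k, A k ∈ F) {i j : ℕ} (hij : i ≤ j) :
    (⋃ k ∈ Finset.Icc i j, A k) ∈ F :=
  biUnion_mem_of_supClosed hunion (Finset.nonempty_Icc.mpr hij) fun k _ => hA k

lemma tendsto_of_tendsto_biUnion_Icc
    (h : ∀ ε > (0 : ℝ), ∃ N, ∀ i j, N ≤ i → i ≤ j → |μ (⋃ k ∈ Finset.Icc i j, A k) - L| < ε) :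
    Tendsto (fun n => μ (A n)) atTop (𝓝 L) := by
  rw [Metric.tendsto_atTop]
  intro ε hε
  obtain ⟨N, hN⟩ := h ε hε
  refine ⟨N, fun n hn => ?_⟩
  simpa [Real.dist_eq] using hN n n hn le_rfl

lemma symmDiff_biUnion_Icc_lt (hcosup : CoSuperadditiveOn F μp μm)
    (hdiff : ∀ P ∈ F, ∀ Q ∈ F, P \ Q ∈ F) (hunion : SupClosed F) (hA : ∀ k, A k ∈ F)
    (hplus : ∀ ε > (0 : ℝ), ∃ N, ∀ i j, N ≤ i → i ≤ j →
      |μp (⋃ k ∈ Finset.Icc i j, A k) - L| < ε)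
    (hminus : ∀ ε > (0 : ℝ), ∃ N, ∀ i j, N ≤ i → i ≤ j →
      |μm (⋃ k ∈ Finset.Icc i j, A k) - L| < ε) :
    ∀ ε > (0 : ℝ), ∃ N, ∀ i m j, N ≤ i → i ≤ m → m ≤ j →
      μp ((⋃ k ∈ Finset.Icc i j, A k) ∆ A m) < ε := by
  intro ε hε
  obtain ⟨N₁, hN₁⟩ := hplus (ε / 2) (half_pos hε)
  obtain ⟨N₂, hN₂⟩ := hminus (ε / 2) (half_pos hε)
  refine ⟨max N₁ N₂, fun i m j hi him hmj => ?_⟩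
  have hU := abs_lt.mp (hN₁ i j (le_of_max_le_left hi) (him.trans hmj))
  have hAm := abs_lt.mp (hN₂ m m ((le_of_max_le_right hi).trans him) le_rfl)
  simp only [Finset.Icc_self, Finset.mem_singleton, Set.iUnion_iUnion_eq_left] at hAm
  have := hcosup.symmDiff_le_sub hdiff (hA m) (biUnion_Icc_mem hunion hA (him.trans hmj))
    (subset_biUnion_Icc him hmj)
  linarith

lemma cauchy_of_symmDiff_biUnion_Icc_lt (hμ : SubadditiveOn F μ)
    (hsymm : ∀ P ∈ F, ∀ Q ∈ F, P ∆ Q ∈ F) (hunion : SupClosed F) (hA : ∀ k, A k ∈ F)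
    (hclose : ∀ ε > (0 : ℝ), ∃ N, ∀ i m j, N ≤ i → i ≤ m → m ≤ j →
      μ ((⋃ k ∈ Finset.Icc i j, A k) ∆ A m) < ε) :
    ∀ ε > (0 : ℝ), ∃ N, ∀ m n, N ≤ m → N ≤ n → μ (A m ∆ A n) < ε := by
  intro ε hε
  obtain ⟨N, hN⟩ := hclose (ε / 2) (half_pos hε)
  refine ⟨N, fun m n hm hn => ?_⟩
  have hUm := hN (min m n) m (max m n) (le_min hm hn) (min_le_left _ _) (le_max_left _ _)
  have hUn := hN (min m n) n (max m n) (le_min hm hn) (min_le_right _ _) (le_max_right _ _)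
  have := hμ.symmDiff_triangle hsymm (hA m)
    (biUnion_Icc_mem hunion hA (min_le_max : min m n ≤ max m n)) (hA n)
  rw [symmDiff_comm (A m) (⋃ k ∈ Finset.Icc (min m n) (max m n), A k)] at this
  linarith

lemma symmDiff_biUnion_Icc_lt_of_tendsto (hμ : SubadditiveOn F μ)
    (hsymm : ∀ P ∈ F, ∀ Q ∈ F, P ∆ Q ∈ F) (hunion : SupClosed F) (hA : ∀ k, A k ∈ F)
    (hclose : ∀ ε > (0 : ℝ), ∃ N, ∀ i m j, N ≤ i → i ≤ m → m ≤ j →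
      μ ((⋃ k ∈ Finset.Icc i j, A k) ∆ A m) < ε)
    {B : Set X} (hB : B ∈ F)
    (hAB : Tendsto (fun n => μ (A n ∆ B)) atTop (𝓝 0)) :
    ∀ ε > (0 : ℝ), ∃ N, ∀ i j, N ≤ i → i ≤ j → μ ((⋃ k ∈ Finset.Icc i j, A k) ∆ B) < ε := by
  intro ε hε
  obtain ⟨N₁, hN₁⟩ := hclose (ε / 2) (half_pos hε)
  obtain ⟨N₂, hN₂⟩ := eventually_atTop.mp (hAB.eventually (gt_mem_nhds (half_pos hε)))
  refine ⟨max N₁ N₂, fun i j hi hij => ?_⟩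
  have := hμ.symmDiff_triangle hsymm (biUnion_Icc_mem hunion hA hij) (hA i) hB
  linarith [hN₁ i i j (le_of_max_le_left hi) le_rfl hij, hN₂ i (le_of_max_le_right hi)]

end PartialUnions

theorem net_convergence_of_complete_general
    {X : Type*} (F E : Set (Set X)) (μp μm : Set X → ℝ)
    (hEF : E ⊆ F)
    (hcompl : ∀ A ∈ F, Aᶜ ∈ F)
    (hunion : ∀ A ∈ F, ∀ B ∈ F, A ∪ B ∈ F)
    (hsub : ∀ A ∈ F, ∀ B ∈ F, ∀ C ∈ F,
      (∀ x, A.indicator (1 : X → ℝ) x ≤ B.indicator 1 x + C.indicator 1 x) →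
      μp A ≤ μp B + μp C)
    (hcosup : ∀ A ∈ F, ∀ B ∈ F, ∀ C ∈ F,
      (∀ x, B.indicator (1 : X → ℝ) x + C.indicator 1 x ≤ A.indicator 1 x) →
      μp B + μm C ≤ μp A)
    (hcomplete : ∀ S : ℕ → Set X, (∀ n, S n ∈ E) →
      (∀ ε > (0 : ℝ), ∃ N, ∀ m n, N ≤ m → N ≤ n → μp (S m ∆ S n) < ε) →
      ∃ T ∈ E, Tendsto (fun n => μp (S n ∆ T)) atTop (nhds 0))
    (A : ℕ → Set X) (hA : ∀ i, A i ∈ E) (L : ℝ)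
    (hplus : ∀ ε > (0 : ℝ), ∃ N, ∀ i j, N ≤ i → i ≤ j →
      |μp (⋃ k ∈ Finset.Icc i j, A k) - L| < ε)
    (hminus : ∀ ε > (0 : ℝ), ∃ N, ∀ i j, N ≤ i → i ≤ j →
      |μm (⋃ k ∈ Finset.Icc i j, A k) - L| < ε) :
    ∃ B ∈ E, μp B = L ∧
      ∀ ε > (0 : ℝ), ∃ N, ∀ i j, N ≤ i → i ≤ j →
        μp ((⋃ k ∈ Finset.Icc i j, A k) ∆ B) < ε := by
  have hdiff : ∀ P ∈ F, ∀ Q ∈ F, P \ Q ∈ F := fun P hP Q hQ =>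
    diff_mem_of_compl_mem_of_union_mem hcompl hunion hP hQ
  have hsymm : ∀ P ∈ F, ∀ Q ∈ F, P ∆ Q ∈ F := fun P hP Q hQ =>
    symmDiff_mem_of_diff_mem hdiff hunion hP hQ
  have hsub : SubadditiveOn F μp := hsub
  have hAF : ∀ k, A k ∈ F := fun k => hEF (hA k)
  have hclose := symmDiff_biUnion_Icc_lt hcosup hdiff hunion hAF hplus hminus
  obtain ⟨B, hBE, hAB⟩ :=
    hcomplete A hA (cauchy_of_symmDiff_biUnion_Icc_lt hsub hsymm hunion hAF hclose)
  refine ⟨B, hBE, tendsto_nhds_unique ?_ (tendsto_of_tendsto_biUnion_Icc hplus),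
    symmDiff_biUnion_Icc_lt_of_tendsto hsub hsymm hunion hAF hclose (hEF hBE) hAB⟩
  exact hsub.tendsto_of_tendsto_symmDiff hsymm hAF (hEF hBE) hAB

theorem net_convergence_of_complete
    {X : Type*} (F E : Set (Set X)) (μp μm : Set X → ℝ)
    (hEF : E ⊆ F)
    (hempty : (∅ : Set X) ∈ F)
    (hcompl : ∀ A ∈ F, Aᶜ ∈ F)
    (hunion : ∀ A ∈ F, ∀ B ∈ F, A ∪ B ∈ F)
    (hzero : μp ∅ = 0 ∧ μm ∅ = 0)
    (hone : μp Set.univ = 1 ∧ μm Set.univ = 1)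
    (hrange : ∀ A ∈ F, μp A ∈ Set.Icc (0:ℝ) 1 ∧ μm A ∈ Set.Icc (0:ℝ) 1)
    (hsub : ∀ A ∈ F, ∀ B ∈ F, ∀ C ∈ F,
      (∀ x, A.indicator (1 : X → ℝ) x ≤ B.indicator 1 x + C.indicator 1 x) →
      μp A ≤ μp B + μp C)
    (hsuper : ∀ A ∈ F, ∀ B ∈ F, ∀ C ∈ F,
      (∀ x, B.indicator (1 : X → ℝ) x + C.indicator 1 x ≤ A.indicator 1 x) →
      μm B + μm C ≤ μm A)
    (hcosub : ∀ A ∈ F, ∀ B ∈ F, ∀ C ∈ F,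
      (∀ x, A.indicator (1 : X → ℝ) x ≤ B.indicator 1 x + C.indicator 1 x) →
      μm A ≤ μm B + μp C)
    (hcosup : ∀ A ∈ F, ∀ B ∈ F, ∀ C ∈ F,
      (∀ x, B.indicator (1 : X → ℝ) x + C.indicator 1 x ≤ A.indicator 1 x) →
      μp B + μm C ≤ μp A)
    (hagree : ∀ A ∈ E, μp A = μm A)
    (hcomplete : ∀ S : ℕ → Set X, (∀ n, S n ∈ E) →
      (∀ ε > (0 : ℝ), ∃ N, ∀ m n, N ≤ m → N ≤ n → μp (S m ∆ S n) < ε) →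
      ∃ T ∈ E, Tendsto (fun n => μp (S n ∆ T)) atTop (nhds 0))
    (A : ℕ → Set X) (hA : ∀ i, A i ∈ E) (L : ℝ)
    (hplus : ∀ ε > (0 : ℝ), ∃ N, ∀ i j, N ≤ i → i ≤ j →
      |μp (⋃ k ∈ Finset.Icc i j, A k) - L| < ε)
    (hminus : ∀ ε > (0 : ℝ), ∃ N, ∀ i j, N ≤ i → i ≤ j →
      |μm (⋃ k ∈ Finset.Icc i j, A k) - L| < ε) :
    ∃ B ∈ E, μp B = L ∧
      ∀ ε > (0 : ℝ), ∃ N, ∀ i j, N ≤ i → i ≤ j →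
        μp ((⋃ k ∈ Finset.Icc i j, A k) ∆ B) < ε :=
  net_convergence_of_complete_general F E μp μm hEF hcompl hunion hsub hcosup hcomplete A hA L hplus
    hminus
end
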